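/- For every nonnegative integer n, real z and real α: J_0(z) + 2·Σ_{k=1}^∞ (-1)^k J_{(4n+2)k}(z)·cos((4n+2)kα) = (1/(2n+1))·Σ_{ℓ=0}^{2n} cos(z·cos(α + 2πℓ/(2n+1))). -/

import Mathlib

/-!
The Bessel functions `J_m(w)` are the Fourier coefficients of the smooth `2π`-periodic function
`θ ↦ exp (i w sin θ)`, so two integrations by parts make them `O(1/m²)` and the Fourier series
converges pointwise (Jacobi–Anger). Half the sum of its values at `φ ± π/2` is
`cos (w cos φ) = ∑ₘ cos (mπ/2) J_m(w) e^{imφ}`. Averaging over the shifts `φ = α + 2πℓ/N` keeps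
only the indices divisible by `N` (roots-of-unity filter); for odd `N` the factor `cos (mπ/2)`
then kills the odd multiples of `N`, and pairing `m` with `-m` through `J_{-m} = (-1)^m J_m`
turns the remaining exponentials into cosines.
-/

open scoped Real

/-- Bessel function of the first kind of integer order `m`,
defined by `J_m(z) = (1/2π) ∫_0^{2π} e^{i z sin θ - i m θ} dθ`. -/
noncomputable def besselJ (m : ℤ) (z : ℂ) : ℂ :=
  (1 / (2 * Real.pi)) * ∫ θ in (0:ℝ)..(2 * Real.pi),
    Complex.exp (z * Complex.sin (θ:ℂ) * Complex.I - (m:ℂ) * (θ:ℂ) * Complex.I)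

open Complex Finset Function Set

theorem Function.Periodic.deriv {𝕜 F : Type*} [NontriviallyNormedField 𝕜] [NormedAddCommGroup F]
    [NormedSpace 𝕜 F] {T : 𝕜} {f : 𝕜 → F} (hf : Periodic f T) :
    Periodic (_root_.deriv f) T := fun x => by
  rw [← deriv_comp_add_const, show (fun y => f (y + T)) = f from funext hf]

theorem norm_fourierCoeffOn_le {E : Type*} [NormedAddCommGroup E] [NormedSpace ℂ E]
    {a b C : ℝ} (hab : a < b) {g : ℝ → E} (hC : ∀ x ∈ Icc a b, ‖g x‖ ≤ C) (n : ℤ) :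
    ‖fourierCoeffOn hab g n‖ ≤ C := by
  have hba : 0 < b - a := sub_pos.mpr hab
  have hint : ‖∫ x in a..b, fourier (-n) (x : AddCircle (b - a)) • g x‖ ≤ C * |b - a| :=
    intervalIntegral.norm_integral_le_of_norm_le_const fun x hx => by
      rw [norm_smul, fourier_apply, Circle.norm_coe, one_mul]
      exact hC x (Ioc_subset_Icc_self (by simpa [uIoc_of_le hab.le] using hx))
  rw [fourierCoeffOn_eq_integral, norm_smul, Real.norm_of_nonneg (by positivity)]
  calc 1 / (b - a) * _ ≤ 1 / (b - a) * (C * |b - a|) := by gcongr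
    _ = C := by rw [abs_of_pos hba]; field_simp

section FourierSeries

variable {T : ℝ} (hT : 0 < T) {f : ℝ → ℂ}

theorem fourierCoeffOn_eq_div_mul_fourierCoeffOn_deriv (hf : ContDiff ℝ 1 f)
    (hper : Periodic f T) {n : ℤ} (hn : n ≠ 0) :
    fourierCoeffOn hT f n = T / (2 * π * I * n) * fourierCoeffOn hT (deriv f) n := by
  rw [fourierCoeffOn_of_hasDerivAt hT hn
    (fun x _ => (hf.differentiable one_ne_zero x).hasDerivAt)
    (hf.continuous_deriv_one.intervalIntegrable _ _), show f T = f 0 by simpa using hper 0]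
  have : (n : ℂ) ≠ 0 := by exact_mod_cast hn
  field_simp
  simp

theorem exists_norm_fourierCoeffOn_le (hf : ContDiff ℝ 2 f) (hper : Periodic f T) :
    ∃ C, ∀ n : ℤ, n ≠ 0 → ‖fourierCoeffOn hT f n‖ ≤ C / n ^ 2 := by
  have hf' : ContDiff ℝ 1 (deriv f) := hf.deriv'
  obtain ⟨M, hM⟩ := isCompact_Icc.exists_bound_of_continuousOn
    hf'.continuous_deriv_one.continuousOn (s := Icc 0 T)
  refine ⟨(T / (2 * π)) ^ 2 * M, fun n hn => ?_⟩
  rw [fourierCoeffOn_eq_div_mul_fourierCoeffOn_deriv hT (hf.of_le one_le_two) hper hn,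
    fourierCoeffOn_eq_div_mul_fourierCoeffOn_deriv hT hf' hper.deriv hn, ← mul_assoc, norm_mul]
  have hnorm : ‖(T : ℂ) / (2 * π * I * n) * (T / (2 * π * I * n))‖ = (T / (2 * π)) ^ 2 / n ^ 2 := by
    simp [abs_of_pos hT, abs_of_pos Real.pi_pos]
    rw [← sq_abs (n : ℝ)]
    ring
  rw [hnorm, div_mul_eq_mul_div]
  have := norm_fourierCoeffOn_le hT hM n
  gcongr

theorem summable_fourierCoeffOn (hf : ContDiff ℝ 2 f) (hper : Periodic f T) :
    Summable (fourierCoeffOn hT f) := by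
  obtain ⟨C, hC⟩ := exists_norm_fourierCoeffOn_le hT hf hper
  refine .of_norm_bounded_eventually ((Real.summable_one_div_int_pow.mpr one_lt_two).mul_left C) ?_
  filter_upwards [Filter.eventually_cofinite_ne 0] with n hn
  simpa [div_eq_mul_inv] using hC n hn

theorem hasSum_fourierCoeffOn_mul_exp (hf : ContDiff ℝ 2 f) (hper : Periodic f T) (x : ℝ) :
    HasSum (fun n : ℤ => fourierCoeffOn hT f n * exp (2 * π * I * n * x / T)) (f x) := by
  have : Fact (0 < T) := ⟨hT⟩
  let F : C(AddCircle T, ℂ) := ⟨hper.lift, continuous_coinduced_dom.mpr hf.continuous⟩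
  have hF : fourierCoeff F = fourierCoeffOn hT f := by
    ext n
    rw [fourierCoeff_eq_intervalIntegral _ _ 0, fourierCoeffOn_eq_integral]
    simp only [zero_add, sub_zero]
    congr 1
    refine intervalIntegral.integral_congr fun y _ => ?_
    simp [F]
  have := has_pointwise_sum_fourier_series_of_summable
    (hF ▸ summable_fourierCoeffOn hT hf hper) (x : AddCircle T)
  rw [hF] at this
  simpa [F] using this

end FourierSeries

theorem IsPrimitiveRoot.sum_range_zpow_pow {K : Type*} [Field K] {ζ : K} {N : ℕ}
    (hζ : IsPrimitiveRoot ζ N) (m : ℤ) :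
    ∑ ℓ ∈ range N, (ζ ^ m) ^ ℓ = if (N : ℤ) ∣ m then (N : K) else 0 := by
  split_ifs with hdvd
  · simp [(hζ.zpow_eq_one_iff_dvd m).mpr hdvd]
  · have hne : ζ ^ m - 1 ≠ 0 := sub_ne_zero.mpr fun h => hdvd ((hζ.zpow_eq_one_iff_dvd m).mp h)
    have hpow : (ζ ^ m) ^ N = 1 := by
      rw [← zpow_natCast, ← zpow_mul, mul_comm, zpow_mul, zpow_natCast, hζ.pow_eq_one, one_zpow]
    exact (mul_eq_zero.mp (by rw [geom_sum_mul, hpow, sub_self])).resolve_right hne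

theorem sum_range_exp_mul_two_pi_div {N : ℕ} (hN : N ≠ 0) (m : ℤ) :
    ∑ ℓ ∈ range N, exp (2 * π * I * m * ℓ / N) = if (N : ℤ) ∣ m then (N : ℂ) else 0 := by
  rw [← (isPrimitiveRoot_exp N hN).sum_range_zpow_pow m]
  refine sum_congr rfl fun ℓ _ => ?_
  rw [← exp_int_mul, ← exp_nat_mul]
  ring_nf

theorem hasSum_sum_range_add_two_pi_mul_div {c : ℤ → ℂ} {g : ℝ → ℂ}
    (hg : ∀ θ : ℝ, HasSum (fun m : ℤ => c m * exp ((m : ℂ) * (θ : ℂ) * I)) (g θ))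
    {N : ℕ} (hN : N ≠ 0) (θ : ℝ) :
    HasSum (fun t : ℤ => (N : ℂ) * c (N * t) * exp (((N * t : ℤ) : ℂ) * (θ : ℂ) * I))
      (∑ ℓ ∈ range N, g (θ + 2 * π * ℓ / N)) := by
  have hsum : HasSum
      (fun m : ℤ => c m * exp ((m : ℂ) * (θ : ℂ) * I) * if (N : ℤ) ∣ m then (N : ℂ) else 0)
      (∑ ℓ ∈ range N, g (θ + 2 * π * ℓ / N)) := by
    refine (hasSum_sum (s := range N) fun ℓ _ => hg (θ + 2 * π * ℓ / N)).congr_fun fun m => ?_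
    rw [← sum_range_exp_mul_two_pi_div hN, mul_sum]
    refine sum_congr rfl fun ℓ _ => ?_
    rw [mul_assoc, ← exp_add]
    push_cast
    ring_nf
  have hinj : Injective fun t : ℤ => (N : ℤ) * t := mul_right_injective₀ (by exact_mod_cast hN)
  refine ((hinj.hasSum_iff fun m hm => ?_).mpr hsum).congr_fun fun t => ?_
  · rw [if_neg fun ⟨t, ht⟩ => hm ⟨t, ht.symm⟩, mul_zero]
  · simp only [comp_apply, dvd_mul_right, if_true]
    push_cast
    ring

theorem HasSum.nat_add_one_add_neg_add_one {G : Type*} [AddCommGroup G] [TopologicalSpace G]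
    [IsTopologicalAddGroup G] {f : ℤ → G} {a : G} (h : HasSum f a) :
    HasSum (fun k : ℕ => f (k + 1) + f (-(k + 1))) (a - f 0) := by
  simpa [add_sub_add_left_eq_sub] using (hasSum_nat_add_iff' 1).mpr h.nat_add_neg

theorem besselJ_eq_fourierCoeffOn (m : ℤ) (w : ℂ) :
    besselJ m w = fourierCoeffOn Real.two_pi_pos (fun θ : ℝ => exp (w * sin θ * I)) m := by
  rw [fourierCoeffOn_eq_integral, besselJ, real_smul, sub_zero]
  push_cast
  congr 1
  refine intervalIntegral.integral_congr fun θ _ => ?_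
  rw [fourier_coe_apply, smul_eq_mul, ← exp_add]
  congr 1
  field_simp
  push_cast
  ring

/- The substitution `θ ↦ π - θ` turns the integrand of `J_{-m}` into `(-1)^m` times that of `J_m`;
periodicity moves the shifted interval back to `[0, 2π]`. -/
theorem besselJ_neg (m : ℤ) (w : ℂ) : besselJ (-m) w = (-1) ^ m * besselJ m w := by
  set h : ℝ → ℂ := fun θ => exp (w * sin θ * I - m * θ * I)
  have hper : Periodic h (2 * π) := fun θ => by
    simp only [h]
    rw [exp_eq_exp_iff_exists_int]
    exact ⟨-m, by push_cast [sin_add_two_pi]; ring⟩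
  have hrefl : ∀ θ : ℝ, exp (w * sin θ * I - ((-m : ℤ) : ℂ) * θ * I) = (-1) ^ m * h (π - θ) := by
    intro θ
    simp only [h]
    rw [← exp_pi_mul_I, ← exp_int_mul, ← exp_add]
    push_cast [sin_pi_sub]
    ring_nf
  simp only [besselJ, hrefl, intervalIntegral.integral_const_mul,
    intervalIntegral.integral_comp_sub_left h π]
  rw [show π - 2 * π = -π by ring, show π - 0 = -π + 2 * π by ring,
    hper.intervalIntegral_add_eq (-π) 0, zero_add]
  ring

theorem hasSum_besselJ_mul_exp (w : ℂ) (θ : ℝ) :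
    HasSum (fun m : ℤ => besselJ m w * exp (m * θ * I)) (exp (w * sin θ * I)) := by
  have hsin : ContDiff ℝ 2 fun θ : ℝ => sin (θ : ℂ) :=
    (contDiff_sin.restrict_scalars ℝ).comp ofRealCLM.contDiff
  have hper : Periodic (fun θ : ℝ => exp (w * sin θ * I)) (2 * π) := fun θ => by
    simp only [ofReal_add, ofReal_mul, ofReal_ofNat, sin_add_two_pi]
  refine (hasSum_fourierCoeffOn_mul_exp Real.two_pi_pos (by fun_prop) hper θ).congr_fun
    fun m => ?_
  rw [besselJ_eq_fourierCoeffOn]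
  congr 2
  push_cast
  field_simp

theorem hasSum_cos_mul_cos (w : ℂ) (φ : ℝ) :
    HasSum (fun m : ℤ => cos (m * π / 2) * besselJ m w * exp (m * φ * I)) (cos (w * cos φ)) := by
  have h := (hasSum_besselJ_mul_exp w (φ + π / 2)).add (hasSum_besselJ_mul_exp w (φ - π / 2))
  push_cast [sin_add_pi_div_two, sin_sub_pi_div_two] at h
  rw [cos, show -(w * cos φ) * I = w * -cos φ * I by ring]
  refine (h.div_const 2).congr_fun fun m => ?_
  rw [cos, show (m : ℂ) * (φ + π / 2) * I = m * φ * I + m * π / 2 * I by ring,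
    show (m : ℂ) * (φ - π / 2) * I = m * φ * I + -(m * π / 2) * I by ring, exp_add, exp_add]
  ring

theorem hasSum_sum_range_cos_mul_cos {N : ℕ} (hN : Odd N) (w : ℂ) (α : ℝ) :
    HasSum (fun s : ℤ => (N : ℂ) * (-1) ^ s * besselJ (2 * N * s) w *
        exp (((2 * N * s : ℤ) : ℂ) * α * I))
      (∑ ℓ ∈ range N, cos (w * cos (α + 2 * π * ℓ / N : ℝ))) := by
  have h := hasSum_sum_range_add_two_pi_mul_div (hasSum_cos_mul_cos w) hN.pos.ne' α
  have hcos (k : ℤ) : cos ((k : ℂ) * π / 2) = (Real.cos (k * π / 2) : ℂ) := by push_cast; rfl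
  have hinj : Injective fun s : ℤ => 2 * s := mul_right_injective₀ two_ne_zero
  refine ((hinj.hasSum_iff fun t ht => ?_).mpr h).congr_fun fun s => ?_
  · have ht_odd : Odd t := Int.not_even_iff_odd.mp fun ⟨r, hr⟩ => ht ⟨r, show 2 * r = t by omega⟩
    obtain ⟨k, hk⟩ := (Int.odd_coe_nat N |>.mpr hN).mul ht_odd
    rw [hcos, Real.cos_eq_zero_iff.mpr ⟨k, by rw [hk]; push_cast; ring⟩]
    simp
  · have h2 : (((N * (2 * s) : ℤ) : ℝ) * π / 2) = ((N * s : ℤ) : ℝ) * π := by push_cast; ring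
    simp only [comp_apply]
    rw [hcos, h2, Real.cos_int_mul_pi, zpow_mul, (Int.odd_coe_nat N |>.mpr hN).neg_one_zpow,
      show (N : ℤ) * (2 * s) = 2 * N * s by ring]
    push_cast
    ring

theorem hasSum_besselJ_mul_cos {N : ℕ} (hN : Odd N) (w : ℂ) (α : ℝ) :
    HasSum (fun k : ℕ => (-1) ^ (k + 1) * besselJ (2 * N * (k + 1)) w *
        cos (2 * N * (k + 1) * α))
      ((∑ ℓ ∈ range N, cos (w * cos (α + 2 * π * ℓ / N : ℝ))) / (2 * N) - besselJ 0 w / 2) := by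
  have hN0 : (N : ℂ) ≠ 0 := Nat.cast_ne_zero.mpr hN.pos.ne'
  have hfold := (hasSum_sum_range_cos_mul_cos hN w α).nat_add_one_add_neg_add_one
  have h : HasSum (fun k : ℕ => (-1) ^ (k + 1) * besselJ (2 * N * (k + 1)) w *
      cos (2 * N * (k + 1) * α)) _ := (hfold.div_const (2 * N)).congr_fun fun k => by
    have hJ : besselJ (2 * N * -(k + 1)) w = besselJ (2 * N * (k + 1)) w := by
      rw [mul_neg, besselJ_neg, Even.neg_one_zpow ⟨N * (k + 1), by ring⟩, one_mul]
    rw [hJ, cos, zpow_neg, ← inv_zpow, inv_neg_one, ← Nat.cast_succ, zpow_natCast]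
    push_cast
    field_simp
  convert h using 1
  simp
  field_simp

theorem statement9 (n : ℕ) (z α : ℝ) :
    besselJ 0 z + 2 * ∑' k : ℕ,
        (-1 : ℂ) ^ (k + 1) * besselJ ((4 * n + 2) * (k + 1)) z *
          (Real.cos ((4 * n + 2) * (k + 1) * α) : ℂ) =
      (1 / ((2 * n + 1 : ℕ) : ℂ)) * ∑ ℓ ∈ Finset.range (2 * n + 1),
        (Real.cos (z * Real.cos (α + 2 * π * ℓ / (2 * n + 1))) : ℂ) := by
  have h := hasSum_besselJ_mul_cos (odd_two_mul_add_one n) z α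
  rw [(h.congr_fun fun k => ?_).tsum_eq]
  · push_cast
    field_simp
    ring
  · push_cast
    ring_nf
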